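/- There exists a constant C > 0 such that for every polynomial q : ℝ² → ℝ of total degree at most 1 with ∫_{T̂} q(x) dx = 0, there exist a, b ∈ ℝ with a ∂₁φ + b ∂₂φ = q identically on ℝ², and ∫_{T̂} (a² + b²)(φ(x)² + ‖∇φ(x)‖²) dx ≤ C ∫_{T̂} q(x)² dx. -/

import Mathlib

/-!
Differentiating `φ` gives `∂₁φ = 6 - 12x₁ - 6x₂` and `∂₂φ = 6 - 6x₁ - 12x₂`, which span exactly
the affine functions `α + βx₁ + γx₂` with `α = -(β + γ)/3`, i.e. those of mean zero on `T̂`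
(the first moments of `T̂` are `1/6` and its area is `1/2`). So `q = a∂₁φ + b∂₂φ` has the unique
solution `a = (γ - 2β)/18`, `b = (β - 2γ)/18`. Integrating `q²` over `T̂` gives `(β² - βγ + γ²)/36`,
which dominates `a² + b²`, while `φ² + ‖∇φ‖² ≤ 76` pointwise on `T̂`, so `C = 38` works.
-/

open MeasureTheory
open scoped MeasureTheory

noncomputable section

abbrev E2 : Type := EuclideanSpace ℝ (Fin 2)

/-- The point `(a, b)` in `ℝ²`. -/
def pt (a b : ℝ) : E2 := WithLp.toLp 2 ![a, b]

/-- The closed reference triangle with vertices `(0,0)`, `(1,0)`, `(0,1)`. -/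
def refT : Set E2 := {x : E2 | 0 ≤ x 0 ∧ 0 ≤ x 1 ∧ x 0 + x 1 ≤ 1}

/-- The Fortin–Soulie bubble function. -/
def phi (x : E2) : ℝ := 2 - 3 * ((1 - x 0 - x 1) ^ 2 + (x 0) ^ 2 + (x 1) ^ 2)

/-- `i`-th partial derivative of a scalar function. -/
def dphi (i : Fin 2) (x : E2) : ℝ := fderiv ℝ phi x (EuclideanSpace.single i 1)

/-- `f` is (the evaluation map of) a polynomial of total degree at most `n`. -/
def IsPolyDeg (n : ℕ) (f : E2 → ℝ) : Prop :=
  ∃ p : MvPolynomial (Fin 2) ℝ, p.totalDegree ≤ n ∧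
    ∀ x : E2, f x = MvPolynomial.eval (fun i => x i) p

/-- Each component of `w` is a polynomial of total degree at most `n`. -/
def IsPolyVec (n : ℕ) (w : E2 → E2) : Prop :=
  ∀ i : Fin 2, IsPolyDeg n (fun x => w x i)

/-- The bubble vector field `(a φ, b φ)`. -/
def bub (a b : ℝ) (x : E2) : E2 := pt (a * phi x) (b * phi x)

/-- Jacobian determinant. -/
def jdet (F : E2 → E2) (x : E2) : ℝ := LinearMap.det (fderiv ℝ F x : E2 →ₗ[ℝ] E2)

/-- Piola transform matrix `A(x) = DF(x)/det DF(x)` as a continuous linear map. -/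
def piola (F : E2 → E2) (x : E2) : E2 →L[ℝ] E2 := (jdet F x)⁻¹ • fderiv ℝ F x

/-- Divergence: trace of the Jacobian. -/
def divg (f : E2 → E2) (x : E2) : ℝ :=
  LinearMap.trace ℝ E2 (fderiv ℝ f x : E2 →ₗ[ℝ] E2)

/-- `(K,h)`-admissible map. -/
def IsAdmissible (K h : ℝ) (F : E2 → E2) : Prop :=
  IsPolyVec 2 F ∧ Set.InjOn F refT ∧
  ∀ x ∈ refT, ∃ e : E2 ≃L[ℝ] E2,
    (e : E2 →L[ℝ] E2) = fderiv ℝ F x ∧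
    ‖(e : E2 →L[ℝ] E2)‖ ≤ K * h ∧
    ‖(e.symm : E2 →L[ℝ] E2)‖ ≤ K * h⁻¹ ∧
    ‖fderiv ℝ (fderiv ℝ F) x‖ ≤ K * h ^ 2 ∧
    K⁻¹ * h ^ 2 ≤ jdet F x ∧ jdet F x ≤ K * h ^ 2

/-- The six quadratic Lagrange nodes of the reference triangle. -/
def nodes : Set E2 :=
  {pt 0 0, pt 1 0, pt 0 1, pt (1/2) 0, pt (1/2) (1/2), pt 0 (1/2)}

/-- `(P, Q)` are the endpoints of an edge of the reference triangle. -/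
def IsEdgePair (P Q : E2) : Prop :=
  (P = pt 0 0 ∧ Q = pt 1 0) ∨ (P = pt 0 0 ∧ Q = pt 0 1) ∨ (P = pt 1 0 ∧ Q = pt 0 1)

/-- Sobolev seminorm `|v|_{W^{m,p}(S)}`. -/
def sobSemi (m : ℕ) (p : ℝ) (S : Set E2) (v : E2 → E2) : ℝ :=
  (∫ x in S, ‖iteratedFDeriv ℝ m v x‖ ^ p) ^ (1 / p)

namespace MvPolynomial

theorem eq_C_add_sum_monomial_of_totalDegree_le_one {σ R : Type*} [Fintype σ] [CommSemiring R]
    {p : MvPolynomial σ R} (hp : p.totalDegree ≤ 1) :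
    p = C (coeff 0 p) + ∑ i, monomial (Finsupp.single i 1) (coeff (Finsupp.single i 1) p) := by
  classical
  ext d
  simp only [coeff_add, coeff_C, coeff_sum, coeff_monomial]
  rcases Nat.lt_or_ge 1 d.degree with hd | hd
  · have h0 : 0 ≠ d := by rintro rfl; simp at hd
    have h1 : ∀ i, Finsupp.single i 1 ≠ d := by rintro i rfl; simp at hd
    rw [coeff_eq_zero_of_totalDegree_lt (hp.trans_lt hd)]
    simp [h0, h1]
  · rcases Nat.le_one_iff_eq_zero_or_eq_one.1 hd with hd | hd
    · obtain rfl := (Finsupp.degree_eq_zero_iff d).1 hd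
      simp
    · obtain ⟨j, rfl⟩ : d ∈ Set.range fun i => Finsupp.single i 1 := by
        rw [Finsupp.range_single_one]; exact hd
      have hj : (0 : σ →₀ ℕ) ≠ Finsupp.single j 1 := (Finsupp.single_ne_zero.2 one_ne_zero).symm
      simp [hj, Finsupp.single_left_inj]

theorem eval_eq_of_totalDegree_le_one {σ R : Type*} [Fintype σ] [CommSemiring R]
    {p : MvPolynomial σ R} (hp : p.totalDegree ≤ 1) (x : σ → R) :
    eval x p = coeff 0 p + ∑ i, coeff (Finsupp.single i 1) p * x i := by
  conv_lhs => rw [eq_C_add_sum_monomial_of_totalDegree_le_one hp]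
  simp [eval_monomial]

end MvPolynomial

section

variable {α β E : Type*} [MeasurableSpace α] [MeasurableSpace β] [NormedAddCommGroup E]
  [NormedSpace ℝ E] {μ : Measure α} {ν : Measure β} [SFinite μ] [SFinite ν]

theorem setIntegral_prod_eq_integral_setIntegral {S : Set (α × β)} (hS : MeasurableSet S)
    {F : α × β → E} (hF : IntegrableOn F S (μ.prod ν)) :
    ∫ p in S, F p ∂μ.prod ν = ∫ x, ∫ y in Prod.mk x ⁻¹' S, F (x, y) ∂ν ∂μ := by
  rw [← integral_indicator hS, integral_prod _ ((integrable_indicator_iff hS).2 hF)]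
  congr with x
  rw [← integral_indicator (measurable_prodMk_left hS)]
  rfl

end

open intervalIntegral in
theorem integral_cubic (a b c d t : ℝ) :
    ∫ y in (0:ℝ)..t, (a + b * y + c * y ^ 2 + d * y ^ 3) =
      a * t + b * t ^ 2 / 2 + c * t ^ 3 / 3 + d * t ^ 4 / 4 := by
  have hderiv : ∀ y ∈ Set.uIcc 0 t, HasDerivAt
      (fun y => a * y + b * y ^ 2 / 2 + c * y ^ 3 / 3 + d * y ^ 4 / 4)
      (a + b * y + c * y ^ 2 + d * y ^ 3) y := by
    intro y _
    refine ((((hasDerivAt_id' y).const_mul a).add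
      (((hasDerivAt_pow 2 y).const_mul b).div_const 2)).add
      (((hasDerivAt_pow 3 y).const_mul c).div_const 3)).add
      (((hasDerivAt_pow 4 y).const_mul d).div_const 4) |>.congr_deriv ?_
    norm_num
    ring
  rw [integral_eq_sub_of_hasDerivAt hderiv (by apply Continuous.intervalIntegrable; fun_prop)]
  ring

@[simp] theorem pt_apply_zero (a b : ℝ) : pt a b 0 = a := rfl

@[simp] theorem pt_apply_one (a b : ℝ) : pt a b 1 = b := rfl

def ptEquiv : (ℝ × ℝ) ≃ᵐ E2 :=
  MeasurableEquiv.finTwoArrow.symm.trans (MeasurableEquiv.toLp 2 (Fin 2 → ℝ))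

theorem ptEquiv_apply (p : ℝ × ℝ) : ptEquiv p = pt p.1 p.2 := rfl

theorem measurePreserving_ptEquiv : MeasurePreserving ptEquiv :=
  (PiLp.volume_preserving_toLp (Fin 2)).comp ((volume_preserving_finTwoArrow ℝ).symm _)

theorem isClosed_refT : IsClosed refT := by
  simp only [refT, Set.ofPred_and]
  refine IsClosed.inter ?_ (IsClosed.inter ?_ ?_) <;> apply isClosed_le <;> fun_prop

theorem isCompact_refT : IsCompact refT := by
  refine ((isCompact_Icc (a := 0) (b := 1)).image (PiLp.continuous_toLp 2 _)).of_isClosed_subset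
    isClosed_refT fun x ⟨h0, h1, h01⟩ => ⟨x.ofLp, ⟨fun i => ?_, fun i => ?_⟩, rfl⟩ <;>
  fin_cases i <;>
  simp only [Fin.zero_eta, Fin.mk_one, Fin.isValue, Pi.zero_apply, Pi.one_apply] <;>
  linarith

theorem setIntegral_refT_eq_intervalIntegral {f : E2 → ℝ} (hf : IntegrableOn f refT) :
    ∫ x in refT, f x = ∫ s in (0:ℝ)..1, ∫ t in (0:ℝ)..(1 - s), f (pt s t) := by
  rw [← measurePreserving_ptEquiv.setIntegral_preimage_emb ptEquiv.measurableEmbedding,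
    Measure.volume_eq_prod, setIntegral_prod_eq_integral_setIntegral
      (isClosed_refT.measurableSet.preimage ptEquiv.measurable)
      (by rw [← Measure.volume_eq_prod]
          exact (measurePreserving_ptEquiv.integrableOn_comp_preimage
            ptEquiv.measurableEmbedding).2 hf),
    intervalIntegral.integral_of_le zero_le_one, ← integral_Icc_eq_integral_Ioc,
    ← integral_indicator measurableSet_Icc]
  congr with s
  have hfiber : Prod.mk s ⁻¹' (ptEquiv ⁻¹' refT) = {t | 0 ≤ s ∧ 0 ≤ t ∧ s + t ≤ 1} := by
    ext t; simp [refT, ptEquiv_apply, pt]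
  by_cases hs : s ∈ Set.Icc (0:ℝ) 1
  · have hIcc : Prod.mk s ⁻¹' (ptEquiv ⁻¹' refT) = Set.Icc 0 (1 - s) := by
      rw [hfiber]
      exact Set.ext fun t =>
        ⟨fun ⟨_, ht0, hst⟩ => ⟨ht0, by linarith⟩, fun ⟨ht0, hts⟩ => ⟨hs.1, ht0, by linarith⟩⟩
    rw [Set.indicator_of_mem hs, hIcc, integral_Icc_eq_integral_Ioc,
      ← intervalIntegral.integral_of_le (by linarith [hs.2])]
    rfl
  · have hempty : Prod.mk s ⁻¹' (ptEquiv ⁻¹' refT) = ∅ := by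
      rw [hfiber, Set.eq_empty_iff_forall_notMem]
      exact fun t ⟨hs0, ht0, hst⟩ => hs ⟨hs0, by linarith⟩
    rw [Set.indicator_of_notMem hs, hempty, Measure.restrict_empty, integral_zero_measure]

theorem setIntegral_refT_quadratic (c₀ c₁ c₂ c₁₁ c₁₂ c₂₂ : ℝ) :
    ∫ x in refT, (c₀ + c₁ * x 0 + c₂ * x 1 + c₁₁ * x 0 ^ 2 + c₁₂ * (x 0 * x 1) + c₂₂ * x 1 ^ 2) =
      c₀ / 2 + c₁ / 6 + c₂ / 6 + c₁₁ / 12 + c₁₂ / 24 + c₂₂ / 12 := by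
  rw [setIntegral_refT_eq_intervalIntegral
    (ContinuousOn.integrableOn_compact isCompact_refT (by fun_prop))]
  have hinner : ∀ s : ℝ, ∫ t in (0:ℝ)..(1 - s),
      (c₀ + c₁ * s + c₂ * t + c₁₁ * s ^ 2 + c₁₂ * (s * t) + c₂₂ * t ^ 2) =
      (c₀ + c₂ / 2 + c₂₂ / 3) + (c₁ - c₀ - c₂ + c₁₂ / 2 - c₂₂) * s +
        (c₁₁ - c₁ + c₂ / 2 - c₁₂ + c₂₂) * s ^ 2 + (c₁₂ / 2 - c₁₁ - c₂₂ / 3) * s ^ 3 := by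
    intro s
    calc _ = ∫ t in (0:ℝ)..(1 - s),
          ((c₀ + c₁ * s + c₁₁ * s ^ 2) + (c₂ + c₁₂ * s) * t + c₂₂ * t ^ 2 + 0 * t ^ 3) := by
          congr with t; ring
      _ = _ := by rw [integral_cubic]; ring
  simp only [pt_apply_zero, pt_apply_one, hinner, integral_cubic]
  ring

theorem fderiv_apply_single_eq_gradient_apply {ι : Type*} [Fintype ι] [DecidableEq ι]
    (f : EuclideanSpace ℝ ι → ℝ) (x : EuclideanSpace ℝ ι) (i : ι) :
    fderiv ℝ f x (EuclideanSpace.single i 1) = gradient f x i := by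
  rw [← inner_gradient_left, EuclideanSpace.inner_single_right]
  simp

theorem hasGradientAt_phi (x : E2) :
    HasGradientAt phi (pt (6 - 12 * x 0 - 6 * x 1) (6 - 6 * x 0 - 12 * x 1)) x := by
  have h₀ : HasFDerivAt (fun y : E2 => y 0) (EuclideanSpace.proj (𝕜 := ℝ) (0 : Fin 2)) x :=
    (EuclideanSpace.proj (𝕜 := ℝ) (0 : Fin 2)).hasFDerivAt
  have h₁ : HasFDerivAt (fun y : E2 => y 1) (EuclideanSpace.proj (𝕜 := ℝ) (1 : Fin 2)) x :=
    (EuclideanSpace.proj (𝕜 := ℝ) (1 : Fin 2)).hasFDerivAt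
  rw [hasGradientAt_iff_hasFDerivAt]
  refine (((((h₀.const_sub 1).sub h₁).pow 2).add (h₀.pow 2)).add (h₁.pow 2)
    |>.const_mul 3 |>.const_sub 2).congr_fderiv ?_
  ext v
  simp only [Fin.isValue, Pi.sub_apply, Nat.add_one_sub_one, pow_one, nsmul_eq_mul,
    Nat.cast_ofNat, smul_add, neg_add_rev, add_apply, neg_apply, smul_apply, sub_apply,
    PiLp.proj_apply, smul_eq_mul, pt, InnerProductSpace.toDual_apply_apply, PiLp.inner_apply,
    RCLike.inner_apply, Real.ringHom_apply, Fin.sum_univ_two, Matrix.cons_val_zero,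
    Matrix.cons_val_one, Matrix.cons_val_fin_one]
  ring

theorem gradient_phi (x : E2) :
    gradient phi x = pt (6 - 12 * x 0 - 6 * x 1) (6 - 6 * x 0 - 12 * x 1) :=
  (hasGradientAt_phi x).gradient

theorem dphi_zero (x : E2) : dphi 0 x = 6 - 12 * x 0 - 6 * x 1 := by
  rw [dphi, fderiv_apply_single_eq_gradient_apply, gradient_phi, pt_apply_zero]

theorem dphi_one (x : E2) : dphi 1 x = 6 - 6 * x 0 - 12 * x 1 := by
  rw [dphi, fderiv_apply_single_eq_gradient_apply, gradient_phi, pt_apply_one]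

theorem norm_gradient_phi_sq (x : E2) :
    ‖gradient phi x‖ ^ 2 = (6 - 12 * x 0 - 6 * x 1) ^ 2 + (6 - 6 * x 0 - 12 * x 1) ^ 2 := by
  rw [EuclideanSpace.real_norm_sq_eq, Fin.sum_univ_two, gradient_phi, pt_apply_zero,
    pt_apply_one]

theorem phi_sq_add_norm_gradient_phi_sq_le {x : E2} (hx : x ∈ refT) :
    phi x ^ 2 + ‖gradient phi x‖ ^ 2 ≤ 76 := by
  obtain ⟨hx₀, hx₁, hx₀₁⟩ := hx
  rw [norm_gradient_phi_sq, phi]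
  have hφ : (2 - 3 * ((1 - x 0 - x 1) ^ 2 + x 0 ^ 2 + x 1 ^ 2)) ^ 2 ≤ 4 := by
    nlinarith [mul_nonneg hx₀ hx₁, mul_nonneg hx₀ (sub_nonneg.2 hx₀₁),
      mul_nonneg hx₁ (sub_nonneg.2 hx₀₁)]
  have h₀ : (6 - 12 * x 0 - 6 * x 1) ^ 2 ≤ 36 := by nlinarith
  have h₁ : (6 - 6 * x 0 - 12 * x 1) ^ 2 ≤ 36 := by nlinarith
  linarith

theorem setIntegral_refT_phi_sq_add_norm_gradient_phi_sq_le :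
    ∫ x in refT, (phi x ^ 2 + ‖gradient phi x‖ ^ 2) ≤ 38 := by
  have hcont : Continuous fun x => phi x ^ 2 + ‖gradient phi x‖ ^ 2 := by
    simp only [norm_gradient_phi_sq, phi]
    fun_prop
  calc ∫ x in refT, (phi x ^ 2 + ‖gradient phi x‖ ^ 2)
      ≤ ∫ _ in refT, (76 : ℝ) :=
        setIntegral_mono_on (hcont.continuousOn.integrableOn_compact isCompact_refT)
          (integrableOn_const isCompact_refT.measure_lt_top.ne) isClosed_refT.measurableSet
          fun _ hx => phi_sq_add_norm_gradient_phi_sq_le hx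
    _ = 38 := by simpa using (setIntegral_refT_quadratic 76 0 0 0 0 0).trans (by norm_num)

theorem IsPolyDeg.exists_eq_affine {q : E2 → ℝ} (hq : IsPolyDeg 1 q) :
    ∃ α β γ : ℝ, q = fun x => α + β * x 0 + γ * x 1 := by
  obtain ⟨p, hp, hqp⟩ := hq
  refine ⟨p.coeff 0, p.coeff (Finsupp.single 0 1), p.coeff (Finsupp.single 1 1), funext fun x => ?_⟩
  rw [hqp, MvPolynomial.eval_eq_of_totalDegree_le_one hp, Fin.sum_univ_two]
  ring

/-- every zero-mean affine function is the divergence of a bubble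
field, with an `H¹`-stable choice of coefficients. -/
theorem stmt2 :
    ∃ C > (0 : ℝ), ∀ q : E2 → ℝ, IsPolyDeg 1 q → (∫ x in refT, q x) = 0 →
      ∃ a b : ℝ, (∀ x : E2, a * dphi 0 x + b * dphi 1 x = q x) ∧
        (∫ x in refT, (a ^ 2 + b ^ 2) * (phi x ^ 2 + ‖gradient phi x‖ ^ 2)) ≤
          C * ∫ x in refT, q x ^ 2 := by
  refine ⟨38, by norm_num, fun q hq hmean => ?_⟩
  obtain ⟨α, β, γ, rfl⟩ := hq.exists_eq_affine
  have hα : α = -(β + γ) / 3 := by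
    have h := setIntegral_refT_quadratic α β γ 0 0 0
    simp only [zero_mul, add_zero, hmean] at h
    linarith
  have hq_sq : ∫ x in refT, (α + β * x 0 + γ * x 1) ^ 2 = (β ^ 2 - β * γ + γ ^ 2) / 36 := by
    calc _ = ∫ x in refT, (α ^ 2 + 2 * α * β * x 0 + 2 * α * γ * x 1 + β ^ 2 * x 0 ^ 2 +
          2 * β * γ * (x 0 * x 1) + γ ^ 2 * x 1 ^ 2) := by
          congr with x; ring
      _ = _ := by rw [setIntegral_refT_quadratic, hα]; ring
  refine ⟨(γ - 2 * β) / 18, (β - 2 * γ) / 18, fun x => by rw [dphi_zero, dphi_one, hα]; ring, ?_⟩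
  rw [integral_const_mul, hq_sq]
  calc _ ≤ (((γ - 2 * β) / 18) ^ 2 + ((β - 2 * γ) / 18) ^ 2) * 38 :=
        mul_le_mul_of_nonneg_left setIntegral_refT_phi_sq_add_norm_gradient_phi_sq_le
          (by positivity)
    _ ≤ 38 * ((β ^ 2 - β * γ + γ ^ 2) / 36) := by
        nlinarith [sq_nonneg (β + γ), sq_nonneg (β - γ)]
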